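/- Let l > 0, let u : B_l → ℝ² be measurable, and let (u_k) be Lipschitz maps from B_l to ℝ² with sup_k ∫_{B_l} |∇u_k| dx < ∞ and u_k → u a.e. on B_l. Then for Lebesgue-a.e. ε ∈ (0, l) the following two properties hold: liminf_{k→∞} ∫_{∂B_ε} |∇u_k| dℋ¹ < ∞, and u_k(x) → u(x) for ℋ¹-a.e. x ∈ ∂B_ε. -/

import Mathlib

open MeasureTheory Filter Metric Topology
open scoped ENNReal NNReal

noncomputable section

abbrev V2 : Type := EuclideanSpace ℝ (Fin 2)

/-- Squared Frobenius norm of (the matrix of) a continuous linear map on `ℝ²`. -/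
def frobSq (L : V2 →L[ℝ] V2) : ℝ :=
  ∑ i : Fin 2, ∑ j : Fin 2, (L (EuclideanSpace.single j 1) i) ^ 2

/-- Determinant of (the matrix of) a continuous linear map on `ℝ²`. -/
def detJ (L : V2 →L[ℝ] V2) : ℝ :=
  L (EuclideanSpace.single 0 1) 0 * L (EuclideanSpace.single 1 1) 1 -
    L (EuclideanSpace.single 1 1) 0 * L (EuclideanSpace.single 0 1) 1

/-- The vortex map `x ↦ x / |x|` (equal to `0` at the origin). -/
def vortex (x : V2) : V2 := ‖x‖⁻¹ • x

/-- The area integrand `√(1 + |∇v|² + (det ∇v)²)`. -/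
def areaIntegrand (v : V2 → V2) (x : V2) : ℝ :=
  Real.sqrt (1 + frobSq (fderiv ℝ v x) + detJ (fderiv ℝ v x) ^ 2)

/-- Area of the graph of `v` over the set `E`. -/
def graphArea (v : V2 → V2) (E : Set V2) : ℝ≥0∞ :=
  ∫⁻ x in E, ENNReal.ofReal (areaIntegrand v x)

/-- `∫_{B_l} √(1 + |∇u|²) dx` for the vortex map `u`. -/
def vortexGradArea (l : ℝ) : ℝ≥0∞ :=
  ∫⁻ x in ball (0 : V2) l, ENNReal.ofReal (Real.sqrt (1 + frobSq (fderiv ℝ vortex x)))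

/-- The `L¹`-relaxed area of the graph of the vortex map over `B_l`:
the infimum of `liminf_k 𝒜(v_k, B_l)` over all sequences `(v_k)` of maps that are
`C¹` on `B_l` and converge to the vortex map in `L¹(B_l, ℝ²)`. -/
def relaxedArea (l : ℝ) : ℝ≥0∞ :=
  sInf { a : ℝ≥0∞ | ∃ v : ℕ → V2 → V2,
    (∀ k, ContDiffOn ℝ 1 (v k) (ball (0 : V2) l)) ∧
    Tendsto (fun k => ∫⁻ x in ball (0 : V2) l, ENNReal.ofReal ‖v k x - vortex x‖)
      atTop (𝓝 0) ∧
    a = Filter.liminf (fun k => graphArea (v k) (ball (0 : V2) l)) atTop }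

section Aux
open Set Real

/-- The standard linear isometry `ℂ ≃ V2`. -/
def cIso : ℂ ≃ₗᵢ[ℝ] V2 :=
  Complex.isometryOfOrthonormal (EuclideanSpace.basisFun (Fin 2) ℝ)

lemma nnabs_coe_ennreal {ε : ℝ} (hε : 0 ≤ ε) :
    (Real.nnabs ε : ℝ≥0∞) = ENNReal.ofReal ε := by
  have h : Real.nnabs ε = Real.toNNReal ε := by
    ext
    simp [Real.coe_toNNReal', abs_of_nonneg hε, max_eq_left hε]
  rw [h]
  rfl

lemma lipschitz_circle (ε : ℝ) :
    LipschitzWith (Real.nnabs ε) (fun θ => cIso (circleMap 0 ε θ)) := by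
  have h := (cIso.isometry.lipschitz).comp (lipschitzWith_circleMap 0 ε)
  rw [one_mul] at h
  exact h

lemma sphere_eq_image {ε : ℝ} (hε : 0 ≤ ε) :
    sphere (0 : V2) ε = (fun θ => cIso (circleMap 0 ε θ)) '' Set.Ioc (-π) π := by
  have h1 : circleMap 0 ε '' Set.Ioc (-π) π = sphere (0 : ℂ) ε := by
    have h := (periodic_circleMap 0 ε).image_Ioc Real.two_pi_pos (-π)
    rw [show -π + 2 * π = π by ring] at h
    rw [h, range_circleMap, _root_.abs_of_nonneg hε]
  have h2 : sphere (0 : V2) ε = cIso '' sphere (0 : ℂ) ε := by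
    ext x
    constructor
    · intro hx
      refine ⟨cIso.symm x, ?_, by simp⟩
      rw [mem_sphere_zero_iff_norm] at hx ⊢
      simp [hx]
    · rintro ⟨z, hz, rfl⟩
      rw [mem_sphere_zero_iff_norm] at hz ⊢
      simp [hz]
  rw [h2, ← h1, Set.image_image]

lemma sphere_restrict_le {ε : ℝ} (hε : 0 < ε) :
    μH[1].restrict (sphere (0 : V2) ε) ≤
      Measure.map (fun θ => cIso (circleMap 0 ε θ))
        (ENNReal.ofReal ε • volume.restrict (Set.Ioo (-π) π)) := by
  set φ : ℝ → V2 := fun θ => cIso (circleMap 0 ε θ) with hφ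
  have hφc : Continuous φ := cIso.continuous.comp (continuous_circleMap 0 ε)
  refine Measure.le_iff.2 fun A hA => ?_
  rw [Measure.restrict_apply hA, Measure.map_apply hφc.measurable hA, Measure.smul_apply,
    smul_eq_mul, Measure.restrict_apply (hφc.measurable hA)]
  have hsub : A ∩ sphere (0 : V2) ε ⊆ φ '' (φ ⁻¹' A ∩ Set.Ioc (-π) π) := by
    rintro x ⟨hxA, hxs⟩
    rw [sphere_eq_image hε.le] at hxs
    obtain ⟨θ, hθ, rfl⟩ := hxs
    exact ⟨θ, ⟨hxA, hθ⟩, rfl⟩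
  calc μH[1] (A ∩ sphere (0 : V2) ε)
      ≤ μH[1] (φ '' (φ ⁻¹' A ∩ Set.Ioc (-π) π)) := measure_mono hsub
    _ ≤ (Real.nnabs ε : ℝ≥0∞) ^ (1 : ℝ) * μH[1] (φ ⁻¹' A ∩ Set.Ioc (-π) π) :=
        (lipschitz_circle ε).lipschitzOnWith.hausdorffMeasure_image_le zero_le_one
    _ = ENNReal.ofReal ε * volume (φ ⁻¹' A ∩ Set.Ioc (-π) π) := by
        rw [ENNReal.rpow_one, nnabs_coe_ennreal hε.le, MeasureTheory.hausdorffMeasure_real]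
    _ ≤ ENNReal.ofReal ε * volume (φ ⁻¹' A ∩ Set.Ioo (-π) π) := by
        refine mul_le_mul_right ?_ _
        have : φ ⁻¹' A ∩ Set.Ioc (-π) π ⊆ (φ ⁻¹' A ∩ Set.Ioo (-π) π) ∪ {π} := by
          rintro θ ⟨h1, h2, h3⟩
          rcases lt_or_eq_of_le h3 with h | h
          · exact Or.inl ⟨h1, h2, h⟩
          · exact Or.inr (by simp [h])
        refine (measure_mono this).trans ?_
        refine (measure_union_le _ _).trans ?_
        simp

lemma measurable_gradNorm (f : V2 → V2) :
    Measurable fun x => ENNReal.ofReal (Real.sqrt (frobSq (fderiv ℝ f x))) := by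
  have h1 : Continuous fun L : V2 →L[ℝ] V2 => frobSq L := by
    unfold frobSq
    refine continuous_finset_sum _ fun i _ => continuous_finset_sum _ fun j _ => ?_
    exact (((EuclideanSpace.proj i).comp
      (ContinuousLinearMap.apply ℝ V2 (EuclideanSpace.single j 1))).continuous).pow 2
  exact (ENNReal.continuous_ofReal.comp (Real.continuous_sqrt.comp h1)).measurable.comp
    (measurable_fderiv ℝ f)

lemma coarea_le {g : V2 → ℝ≥0∞} (hg : Measurable g) (l : ℝ) :
    ∫⁻ ε in Set.Ioo 0 l,
        ENNReal.ofReal ε * ∫⁻ θ in Set.Ioo (-π) π, g (cIso (circleMap 0 ε θ)) ≤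
      ∫⁻ x in ball (0 : V2) l, g x := by
  have hemb : MeasurableEmbedding (cIso : ℂ → V2) :=
    cIso.toHomeomorph.measurableEmbedding
  have hmp : MeasurePreserving (cIso : ℂ → V2) :=
    LinearIsometryEquiv.measurePreserving cIso
  set h : ℂ → ℝ≥0∞ := fun z => g (cIso z) with hh
  have hhm : Measurable h := hg.comp cIso.continuous.measurable
  -- Step 1 : transfer to ℂ
  have step1 : ∫⁻ z in ball (0 : ℂ) l, h z = ∫⁻ x in ball (0 : V2) l, g x := by
    have himg : cIso '' ball (0 : ℂ) l = ball (0 : V2) l := by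
      have := cIso.toIsometryEquiv.image_ball (0 : ℂ) l
      simpa using this
    rw [← himg]
    exact hmp.setLIntegral_comp_emb hemb g _
  rw [← step1]
  -- Step 2 : transfer ℂ to ℝ × ℝ
  have hmp2 : MeasurePreserving (Complex.measurableEquivRealProd.symm : ℝ × ℝ → ℂ) :=
    Complex.volume_preserving_equiv_real_prod.symm
  have step2 : ∫⁻ q in Complex.measurableEquivRealProd.symm ⁻¹' (ball (0 : ℂ) l),
      h (Complex.measurableEquivRealProd.symm q) = ∫⁻ z in ball (0 : ℂ) l, h z :=
    hmp2.setLIntegral_comp_preimage_emb Complex.measurableEquivRealProd.symm.measurableEmbedding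
      h _
  rw [← step2]
  -- Step 3 : change of variables on ℝ × ℝ
  set s : Set (ℝ × ℝ) := Set.Ioo 0 l ×ˢ Set.Ioo (-π) π with hs
  have hsm : MeasurableSet s := measurableSet_Ioo.prod measurableSet_Ioo
  set B : ℝ × ℝ → ℝ × ℝ →L[ℝ] ℝ × ℝ := fun p =>
    LinearMap.toContinuousLinearMap (Matrix.toLin (Module.Basis.finTwoProd ℝ) (Module.Basis.finTwoProd ℝ)
      !![Real.cos p.2, -p.1 * Real.sin p.2; Real.sin p.2, p.1 * Real.cos p.2]) with hB
  have hder : ∀ p ∈ s, HasFDerivWithinAt polarCoord.symm (B p) s p := fun p _ =>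
    (hasFDerivAt_polarCoord_symm p).hasFDerivWithinAt
  have hinj : Set.InjOn polarCoord.symm s := by
    refine polarCoord.symm.injOn.mono ?_
    rintro ⟨r, θ⟩ ⟨hr, hθ⟩
    exact ⟨hr.1, hθ⟩
  have B_det : ∀ p, (B p).det = p.1 := by
    intro p
    conv_rhs => rw [← one_mul p.1, ← Real.cos_sq_add_sin_sq p.2]
    simp only [hB, neg_mul, LinearMap.det_toContinuousLinearMap, LinearMap.det_toLin,
      Matrix.det_fin_two_of, sub_neg_eq_add]
    ring
  have hcm : ∀ p : ℝ × ℝ,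
      Complex.measurableEquivRealProd.symm (polarCoord.symm p) = circleMap 0 p.1 p.2 := by
    intro p
    rw [circleMap_zero, Complex.exp_mul_I]
    apply Complex.ext <;>
      simp [Complex.measurableEquivRealProd_symm_apply, polarCoord_symm_apply,
        Complex.add_re, Complex.add_im, Complex.mul_re, Complex.mul_im,
        Complex.cos_ofReal_re, Complex.sin_ofReal_re]
  have key := lintegral_image_eq_lintegral_abs_det_fderiv_mul volume hsm hder hinj
    (fun q => h (Complex.measurableEquivRealProd.symm q))
  have himg_sub : polarCoord.symm '' s ⊆
      Complex.measurableEquivRealProd.symm ⁻¹' (ball (0 : ℂ) l) := by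
    rintro q ⟨p, hp, rfl⟩
    simp only [Set.mem_preimage, mem_ball_zero_iff, hcm]
    have : ‖circleMap 0 p.1 p.2‖ = |p.1| := norm_circleMap_zero p.1 p.2
    rw [this, abs_of_pos hp.1.1]
    exact hp.1.2
  -- Step 4 : Tonelli
  have tonelli : ∫⁻ p in s, ENNReal.ofReal |(B p).det| *
        h (Complex.measurableEquivRealProd.symm (polarCoord.symm p)) =
      ∫⁻ ε in Set.Ioo 0 l,
        ENNReal.ofReal ε * ∫⁻ θ in Set.Ioo (-π) π, g (cIso (circleMap 0 ε θ)) := by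
    have heq : ∀ p : ℝ × ℝ, p ∈ s → ENNReal.ofReal |(B p).det| *
        h (Complex.measurableEquivRealProd.symm (polarCoord.symm p)) =
        ENNReal.ofReal p.1 * h (circleMap 0 p.1 p.2) := by
      rintro ⟨r, θ⟩ hp
      rw [hcm, B_det, abs_of_pos hp.1.1]
    rw [setLIntegral_congr_fun hsm heq]
    have hFm : Measurable fun p : ℝ × ℝ => ENNReal.ofReal p.1 * h (circleMap 0 p.1 p.2) := by
      refine (ENNReal.measurable_ofReal.comp measurable_fst).mul (hhm.comp ?_)
      have : Continuous fun p : ℝ × ℝ => circleMap 0 p.1 p.2 := by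
        simp only [circleMap_zero]
        fun_prop
      exact this.measurable
    rw [hs, MeasureTheory.Measure.volume_eq_prod, ← Measure.prod_restrict,
      MeasureTheory.lintegral_prod _ hFm.aemeasurable]
    refine setLIntegral_congr_fun measurableSet_Ioo
      (fun ε _ => ?_)
    rw [lintegral_const_mul' _ _ ENNReal.ofReal_ne_top]
  calc ∫⁻ ε in Set.Ioo 0 l,
        ENNReal.ofReal ε * ∫⁻ θ in Set.Ioo (-π) π, g (cIso (circleMap 0 ε θ))
      = ∫⁻ p in s, ENNReal.ofReal |(B p).det| *
          h (Complex.measurableEquivRealProd.symm (polarCoord.symm p)) := tonelli.symm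
    _ = ∫⁻ q in polarCoord.symm '' s, h (Complex.measurableEquivRealProd.symm q) := key.symm
    _ ≤ ∫⁻ q in Complex.measurableEquivRealProd.symm ⁻¹' (ball (0 : ℂ) l),
          h (Complex.measurableEquivRealProd.symm q) := lintegral_mono_set himg_sub

lemma measurable_circle_lintegral {g : V2 → ℝ≥0∞} (hg : Measurable g) :
    Measurable fun ε : ℝ =>
      ENNReal.ofReal ε * ∫⁻ θ in Set.Ioo (-π) π, g (cIso (circleMap 0 ε θ)) := by
  refine measurable_id.ennreal_ofReal.mul ?_
  have hFm : Measurable fun p : ℝ × ℝ => g (cIso (circleMap 0 p.1 p.2)) := by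
    refine hg.comp (cIso.continuous.comp ?_).measurable
    simp only [circleMap_zero]
    fun_prop
  exact hFm.lintegral_prod_right'

lemma lintegral_sphere_le {g : V2 → ℝ≥0∞} (hg : Measurable g) {ε : ℝ} (hε : 0 < ε) :
    ∫⁻ x in sphere (0 : V2) ε, g x ∂μH[1] ≤
      ENNReal.ofReal ε * ∫⁻ θ in Set.Ioo (-π) π, g (cIso (circleMap 0 ε θ)) := by
  have hφm : Measurable fun θ => cIso (circleMap 0 ε θ) :=
    (cIso.continuous.comp (continuous_circleMap 0 ε)).measurable
  calc ∫⁻ x in sphere (0 : V2) ε, g x ∂μH[1]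
      ≤ ∫⁻ x, g x ∂(Measure.map (fun θ => cIso (circleMap 0 ε θ))
          (ENNReal.ofReal ε • volume.restrict (Set.Ioo (-π) π))) :=
        lintegral_mono' (sphere_restrict_le hε) le_rfl
    _ = ∫⁻ θ, g (cIso (circleMap 0 ε θ))
          ∂(ENNReal.ofReal ε • volume.restrict (Set.Ioo (-π) π)) :=
        lintegral_map hg hφm
    _ = ENNReal.ofReal ε * ∫⁻ θ in Set.Ioo (-π) π, g (cIso (circleMap 0 ε θ)) :=
        lintegral_smul_measure _ _

lemma main_aux1 {l : ℝ} (g : ℕ → V2 → ℝ≥0∞) (hgm : ∀ k, Measurable (g k))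
    (hbound : (⨆ k, ∫⁻ x in ball (0 : V2) l, g k x) < ⊤) :
    ∀ᵐ ε ∂(volume.restrict (Set.Ioo (0 : ℝ) l)),
      Filter.liminf (fun k => ∫⁻ x in sphere (0 : V2) ε, g k x ∂μH[1]) atTop < ⊤ := by
  set G : ℕ → ℝ → ℝ≥0∞ := fun k ε =>
    ENNReal.ofReal ε * ∫⁻ θ in Set.Ioo (-π) π, g k (cIso (circleMap 0 ε θ)) with hG
  have hGm : ∀ k, Measurable (G k) := fun k => measurable_circle_lintegral (hgm k)
  have hfat : ∫⁻ ε in Set.Ioo 0 l, Filter.liminf (fun k => G k ε) atTop ≤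
      ⨆ k, ∫⁻ x in ball (0 : V2) l, g k x := by
    calc ∫⁻ ε in Set.Ioo 0 l, Filter.liminf (fun k => G k ε) atTop
        ≤ Filter.liminf (fun k => ∫⁻ ε in Set.Ioo 0 l, G k ε) atTop := lintegral_liminf_le hGm
      _ ≤ Filter.liminf (fun _ : ℕ => ⨆ k, ∫⁻ x in ball (0 : V2) l, g k x) atTop := by
          refine Filter.liminf_le_liminf (Filter.Eventually.of_forall fun k => ?_)
          exact (coarea_le (hgm k) l).trans (le_iSup (fun k => ∫⁻ x in ball (0 : V2) l, g k x) k)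
      _ = ⨆ k, ∫⁻ x in ball (0 : V2) l, g k x := Filter.liminf_const _
  have hae1 : ∀ᵐ ε ∂(volume.restrict (Set.Ioo (0 : ℝ) l)),
      Filter.liminf (fun k => G k ε) atTop < ⊤ :=
    ae_lt_top (Measurable.liminf hGm) (lt_of_le_of_lt hfat hbound).ne
  filter_upwards [hae1, ae_restrict_mem measurableSet_Ioo] with ε h1 hε
  refine lt_of_le_of_lt ?_ h1
  exact Filter.liminf_le_liminf (Filter.Eventually.of_forall fun k =>
    lintegral_sphere_le (hgm k) hε.1)

lemma main_aux2 {l : ℝ} {W : Set V2} (hWm : MeasurableSet W) (hW0 : volume W = 0) :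
    ∀ᵐ ε ∂(volume.restrict (Set.Ioo (0 : ℝ) l)), μH[1] (W ∩ sphere (0 : V2) ε) = 0 := by
  have hind : Measurable (W.indicator fun _ => (1 : ℝ≥0∞)) :=
    measurable_const.indicator hWm
  have hint : ∫⁻ ε in Set.Ioo 0 l,
      ENNReal.ofReal ε * ∫⁻ θ in Set.Ioo (-π) π,
        W.indicator (fun _ => (1 : ℝ≥0∞)) (cIso (circleMap 0 ε θ)) = 0 := by
    refine le_antisymm ?_ zero_le
    refine (coarea_le hind l).trans ?_
    refine (setLIntegral_le_lintegral _ _).trans ?_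
    rw [lintegral_indicator hWm]
    simp [hW0]
  have hH0 := (lintegral_eq_zero_iff (measurable_circle_lintegral hind)).1 hint
  filter_upwards [hH0, ae_restrict_mem measurableSet_Ioo] with ε h2 hε
  have hφm : Measurable fun θ => cIso (circleMap 0 ε θ) :=
    (cIso.continuous.comp (continuous_circleMap 0 ε)).measurable
  have hθ : ∫⁻ θ in Set.Ioo (-π) π,
      W.indicator (fun _ => (1 : ℝ≥0∞)) (cIso (circleMap 0 ε θ)) =
      volume ((fun θ => cIso (circleMap 0 ε θ)) ⁻¹' W ∩ Set.Ioo (-π) π) := by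
    have : ∀ θ : ℝ, W.indicator (fun _ => (1 : ℝ≥0∞)) (cIso (circleMap 0 ε θ)) =
        ((fun θ => cIso (circleMap 0 ε θ)) ⁻¹' W).indicator (fun _ => (1 : ℝ≥0∞)) θ := by
      intro θ
      rfl
    simp_rw [this]
    rw [lintegral_indicator (hφm hWm), setLIntegral_one, Measure.restrict_apply (hφm hWm)]
  have hmul : ENNReal.ofReal ε *
      volume ((fun θ => cIso (circleMap 0 ε θ)) ⁻¹' W ∩ Set.Ioo (-π) π) = 0 := by
    rw [← hθ]; exact h2
  refine le_antisymm ?_ zero_le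
  calc μH[1] (W ∩ sphere (0 : V2) ε)
      = μH[1].restrict (sphere (0 : V2) ε) W := by
        rw [Measure.restrict_apply' (Metric.isClosed_sphere).measurableSet]
    _ ≤ Measure.map (fun θ => cIso (circleMap 0 ε θ))
          (ENNReal.ofReal ε • volume.restrict (Set.Ioo (-π) π)) W :=
        Measure.le_iff'.1 (sphere_restrict_le hε.1) W
    _ = ENNReal.ofReal ε *
          volume ((fun θ => cIso (circleMap 0 ε θ)) ⁻¹' W ∩ Set.Ioo (-π) π) := by
        rw [Measure.map_apply hφm hWm, Measure.smul_apply, smul_eq_mul,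
          Measure.restrict_apply (hφm hWm)]
    _ = 0 := hmul

end Aux

/-- For a.e. radius `ε ∈ (0, l)`, both the liminf of `∫_{∂B_ε} |∇u_k| dℋ¹` is finite and
`u_k → u` at `ℋ¹`-a.e. point of the circle `∂B_ε`. -/
theorem good_radii_ae (l : ℝ) (hl : 0 < l) (u : V2 → V2) (hu : Measurable u)
    (uk : ℕ → V2 → V2) (K : ℕ → ℝ≥0)
    (hLip : ∀ k, LipschitzOnWith (K k) (uk k) (ball (0 : V2) l))
    (hgrad : (⨆ k, ∫⁻ x in ball (0 : V2) l,
        ENNReal.ofReal (Real.sqrt (frobSq (fderiv ℝ (uk k) x)))) < ⊤)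
    (hae : ∀ᵐ x ∂(volume.restrict (ball (0 : V2) l)),
      Tendsto (fun k => uk k x) atTop (𝓝 (u x))) :
    ∀ᵐ ε ∂(volume.restrict (Set.Ioo (0 : ℝ) l)),
      Filter.liminf (fun k => ∫⁻ x in sphere (0 : V2) ε,
          ENNReal.ofReal (Real.sqrt (frobSq (fderiv ℝ (uk k) x))) ∂μH[1]) atTop < ⊤ ∧
      ∀ᵐ x ∂(μH[1].restrict (sphere (0 : V2) ε)),
        Tendsto (fun k => uk k x) atTop (𝓝 (u x)) := by
  have hgm : ∀ k, Measurable fun x =>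
      ENNReal.ofReal (Real.sqrt (frobSq (fderiv ℝ (uk k) x))) :=
    fun k => measurable_gradNorm (uk k)
  have h1 := main_aux1 (l := l)
    (fun k x => ENNReal.ofReal (Real.sqrt (frobSq (fderiv ℝ (uk k) x)))) hgm hgrad
  -- convergence part
  have hT0 : (volume.restrict (ball (0 : V2) l))
      {x | ¬ Tendsto (fun k => uk k x) atTop (𝓝 (u x))} = 0 := ae_iff.1 hae
  obtain ⟨W, hTW, hWm, hW0⟩ := exists_measurable_superset_of_null hT0
  have hW0' : volume (W ∩ ball (0 : V2) l) = 0 := by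
    rwa [Measure.restrict_apply hWm] at hW0
  have h2 := main_aux2 (l := l) (hWm.inter measurableSet_ball) hW0'
  filter_upwards [h1, h2, ae_restrict_mem measurableSet_Ioo] with ε hε1 hε2 hε
  refine ⟨hε1, ?_⟩
  rw [ae_iff]
  have hsub : {x | ¬ Tendsto (fun k => uk k x) atTop (𝓝 (u x))} ∩ sphere (0 : V2) ε ⊆
      (W ∩ ball (0 : V2) l) ∩ sphere (0 : V2) ε := by
    rintro x ⟨hx, hxs⟩
    refine ⟨⟨hTW hx, ?_⟩, hxs⟩
    rw [mem_ball_zero_iff]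
    rw [mem_sphere_zero_iff_norm] at hxs
    rw [hxs]
    exact hε.2
  rw [Measure.restrict_apply' (Metric.isClosed_sphere).measurableSet]
  exact measure_mono_null hsub hε2
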